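/- arXiv:2411.13074 — 8 statements merged into one kernel-verified Lean document; each statement's English description precedes it below -/
import Mathlib

section
/- Let A be a real 2×2 matrix satisfying A³ − A − 1 = 0 (a plastic matrix). Then either A = ρ·I, where ρ is the plastic number and I is the identity matrix, or the entry A 1 0 = a₂₁ is nonzero, the entry A 0 1 equals (1 − a₁₁·a₂₂ − a₁₁² − a₂₂²)/a₂₁ where a₁₁ = A 0 0 and a₂₂ = A 1 1, and the trace t = a₁₁ + a₂₂ satisfies t³ − t + 1 = 0. -/
/-- The plastic number `ρ = ((9+√69)/18)^(1/3) + ((9−√69)/18)^(1/3)`, the unique real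
solution of `x³ − x − 1 = 0`. -/
noncomputable def plasticNumber : ℝ :=
  ((9 + Real.sqrt 69) / 18) ^ ((1 : ℝ) / 3) + ((9 - Real.sqrt 69) / 18) ^ ((1 : ℝ) / 3)


lemma plastic_root : plasticNumber ^ 3 - plasticNumber - 1 = 0 := by
  have h69 : Real.sqrt 69 ≤ 9 := by
    nlinarith [Real.sq_sqrt (by norm_num : (69:ℝ) ≥ 0), Real.sqrt_nonneg (69:ℝ)]
  have hx : (0:ℝ) ≤ (9 + Real.sqrt 69) / 18 := by
    have := Real.sqrt_nonneg (69:ℝ); linarith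
  have hy : (0:ℝ) ≤ (9 - Real.sqrt 69) / 18 := by linarith
  set u := ((9 + Real.sqrt 69) / 18) ^ ((1 : ℝ) / 3) with hu
  set v := ((9 - Real.sqrt 69) / 18) ^ ((1 : ℝ) / 3) with hv
  have hu3 : u ^ 3 = (9 + Real.sqrt 69) / 18 := by
    rw [hu, ← Real.rpow_natCast (_ ^ _) 3, ← Real.rpow_mul hx]
    norm_num
  have hv3 : v ^ 3 = (9 - Real.sqrt 69) / 18 := by
    rw [hv, ← Real.rpow_natCast (_ ^ _) 3, ← Real.rpow_mul hy]
    norm_num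
  have huv3 : (u * v) ^ 3 = 1 / 27 := by
    rw [mul_pow, hu3, hv3]
    have : Real.sqrt 69 ^ 2 = 69 := Real.sq_sqrt (by norm_num)
    nlinarith
  have huvnn : 0 ≤ u * v :=
    mul_nonneg (Real.rpow_nonneg hx _) (Real.rpow_nonneg hy _)
  have huv : u * v = 1 / 3 := by nlinarith [sq_nonneg (u*v - 1/3), sq_nonneg (u*v + 1/3)]
  have hsum : u ^ 3 + v ^ 3 = 1 := by rw [hu3, hv3]; ring
  show (u + v) ^ 3 - (u + v) - 1 = 0
  linear_combination hsum + 3*(u+v)*huv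

lemma plastic_gt {y : ℝ} (hy : y ^ 3 - y - 1 = 0) : 1 < y := by
  nlinarith [sq_nonneg y, sq_nonneg (y - 1), sq_nonneg (y + 1), sq_nonneg (y*y - 1)]

lemma plastic_unique {x : ℝ} (hx : x ^ 3 - x - 1 = 0) : x = plasticNumber := by
  have hρ := plastic_root
  have h1 := plastic_gt hx
  have h2 := plastic_gt hρ
  have hfac : (x - plasticNumber) * (x^2 + x*plasticNumber + plasticNumber^2 - 1) = 0 := by
    linear_combination hx - hρ
  rcases mul_eq_zero.mp hfac with h | h
  · linarith [sub_eq_zero.mp h]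
  · nlinarith

/-- A real 2×2 plastic matrix (`A³ − A − I = 0`) is either `ρ·I`, or has `a₂₁ ≠ 0`,
`a₁₂ = (1 − a₁₁a₂₂ − a₁₁² − a₂₂²)/a₂₁`, and trace `t` satisfying `t³ − t + 1 = 0`. -/
theorem plastic_matrix_form (A : Matrix (Fin 2) (Fin 2) ℝ)
    (hA : A ^ 3 - A - 1 = 0) :
    A = plasticNumber • (1 : Matrix (Fin 2) (Fin 2) ℝ) ∨
      (A 1 0 ≠ 0 ∧
        A 0 1 = (1 - A 0 0 * A 1 1 - (A 0 0) ^ 2 - (A 1 1) ^ 2) / A 1 0 ∧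
        (A 0 0 + A 1 1) ^ 3 - (A 0 0 + A 1 1) + 1 = 0) := by
  have he := Matrix.ext_iff.mpr hA
  have e00 := he 0 0
  have e01 := he 0 1
  have e10 := he 1 0
  have e11 := he 1 1
  simp [pow_succ, Matrix.mul_apply, Fin.sum_univ_two, Matrix.one_apply,
    Fin.ext_iff] at e00 e01 e10 e11
  by_cases hc : A 1 0 = 0
  · left
    have ha : A 0 0 ^ 3 - A 0 0 - 1 = 0 := by
      linear_combination e00 - (2 * A 0 0 * A 0 1 + A 0 1 * A 1 1) * hc
    have hd : A 1 1 ^ 3 - A 1 1 - 1 = 0 := by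
      linear_combination e11 - (A 0 0 * A 0 1 + 2 * A 0 1 * A 1 1) * hc
    have haρ : A 0 0 = plasticNumber := plastic_unique ha
    have hdρ : A 1 1 = plasticNumber := plastic_unique hd
    have hρ1 : 1 < plasticNumber := plastic_gt plastic_root
    have hb : A 0 1 = 0 := by
      have hfac : A 0 1 * (A 0 0 ^ 2 + A 0 0 * A 1 1 + A 1 1 ^ 2 - 1) = 0 := by
        linear_combination e01 - A 0 1 ^ 2 * hc
      rcases mul_eq_zero.mp hfac with h | h
      · exact h
      · exfalso; rw [haρ, hdρ] at h; nlinarith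
    ext i j
    fin_cases i <;> fin_cases j <;>
      simp [Matrix.smul_apply, Matrix.one_apply] <;>
      first
        | exact haρ
        | exact hdρ
        | exact hb
        | exact hc
  · right
    have hfac : A 1 0 * (A 0 0 ^ 2 + A 0 0 * A 1 1 + A 0 1 * A 1 0 + A 1 1 ^ 2 - 1) = 0 := by
      linear_combination e10
    have h3 : A 0 0 ^ 2 + A 0 0 * A 1 1 + A 0 1 * A 1 0 + A 1 1 ^ 2 - 1 = 0 :=
      (mul_eq_zero.mp hfac).resolve_left hc
    refine ⟨hc, ?_, ?_⟩
    · rw [eq_div_iff hc]; linear_combination h3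
    · linear_combination (-1/2) * e00 + (-1/2) * e11 + (3 * (A 0 0 + A 1 1) / 2) * h3
end

section
/- Let a₁₁, a₂₂ be real numbers and a₂₁ a nonzero real number such that (a₁₁ + a₂₂)³ − (a₁₁ + a₂₂) + 1 = 0. Then the real 2×2 matrix A with rows (a₁₁, (1 − a₁₁·a₂₂ − a₁₁² − a₂₂²)/a₂₁) and (a₂₁, a₂₂) satisfies A³ − A − I = 0. -/
/-!
By Cayley–Hamilton, a 2×2 matrix with trace `t` and determinant `d` satisfies
`A³ = (t² − d) A − t d I`. The upper-right entry is chosen exactly so that `d = t² − 1`, and then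
`A³ = A − (t³ − t) I = A + I` because `t³ − t + 1 = 0`.
-/

namespace Matrix

variable {R : Type*} [CommRing R]

def IsPlastic {n : Type*} [Fintype n] [DecidableEq n] (A : Matrix n n R) : Prop :=
  A ^ 3 - A - 1 = 0

theorem sq_fin_two_eq_trace_smul_sub_det_smul (A : Matrix (Fin 2) (Fin 2) R) :
    A ^ 2 = A.trace • A - A.det • 1 := by
  ext i j
  fin_cases i <;> fin_cases j <;>
    simp only [Fin.zero_eta, Fin.mk_one, Fin.isValue, sq, mul_apply, Fin.sum_univ_two,
      trace_fin_two, det_fin_two, sub_apply, smul_apply, smul_eq_mul, one_apply_eq, ne_eq,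
      zero_ne_one, one_ne_zero, not_false_eq_true, one_apply_ne] <;>
    ring

theorem pow_three_fin_two_eq (A : Matrix (Fin 2) (Fin 2) R) :
    A ^ 3 = (A.trace ^ 2 - A.det) • A - (A.trace * A.det) • 1 := by
  have hsq := sq_fin_two_eq_trace_smul_sub_det_smul A
  calc A ^ 3 = A * A ^ 2 := pow_succ' A 2
    _ = A * (A.trace • A - A.det • 1) := by rw [hsq]
    _ = A.trace • A ^ 2 - A.det • A := by rw [mul_sub, mul_smul_comm, mul_smul_comm, mul_one, sq]
    _ = _ := by rw [hsq]; module

theorem isPlastic_of_det_eq_trace_sq_sub_one (A : Matrix (Fin 2) (Fin 2) R)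
    (hdet : A.det = A.trace ^ 2 - 1) (htr : A.trace ^ 3 - A.trace + 1 = 0) : A.IsPlastic := by
  rw [IsPlastic, pow_three_fin_two_eq, hdet]
  linear_combination (norm := module) -(htr • (1 : Matrix (Fin 2) (Fin 2) R))

end Matrix

/-- If `a₂₁ ≠ 0` and the trace `a₁₁ + a₂₂` satisfies `t³ − t + 1 = 0`, then the 2×2 matrix
with rows `(a₁₁, (1 − a₁₁a₂₂ − a₁₁² − a₂₂²)/a₂₁)` and `(a₂₁, a₂₂)` is a plastic matrix,
i.e. satisfies `A³ − A − I = 0`. -/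
theorem plastic_matrix_of_entries (a11 a22 a21 : ℝ) (h21 : a21 ≠ 0)
    (htr : (a11 + a22) ^ 3 - (a11 + a22) + 1 = 0) :
    (!![a11, (1 - a11 * a22 - a11 ^ 2 - a22 ^ 2) / a21; a21, a22]) ^ 3 -
      !![a11, (1 - a11 * a22 - a11 ^ 2 - a22 ^ 2) / a21; a21, a22] - 1 = 0 := by
  set A := !![a11, (1 - a11 * a22 - a11 ^ 2 - a22 ^ 2) / a21; a21, a22]
  have htrace : A.trace = a11 + a22 := Matrix.trace_fin_two_of ..
  have hdet : A.det = A.trace ^ 2 - 1 := by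
    rw [htrace, Matrix.det_fin_two_of]
    field_simp
    ring
  exact Matrix.isPlastic_of_det_eq_trace_sq_sub_one A hdet (htrace ▸ htr)
end

section
/- Let V be a nontrivial module over ℝ (or any field of characteristic zero), let p, q be real numbers, and let J be a linear endomorphism of V satisfying J² = p·J + q·id (a metallic structure). Then J³ − J − id = 0 if and only if either (p³ − p + 1 = 0 and q = 1 − p²), or (q ≠ 1 − p² and J = ((1 − p·q)/(p² + q − 1))·id). -/
/-! Reducing with the metallic relation gives `J³ − J − 1 = (p² + q − 1)·J + (pq − 1)·id`, and on a
nontrivial space `a·J + b·id` vanishes iff `a = b = 0` or `a ≠ 0` and `J` is the scalar `−b/a`. -/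

section Algebra

variable {R A : Type*} [Ring A]

theorem cube_sub_self_sub_one_of_sq_eq [CommRing R] [Algebra R A] {p q : R} {J : A}
    (hJ : J ^ 2 = p • J + q • (1 : A)) :
    J ^ 3 - J - 1 = (p ^ 2 + q - 1) • J + (p * q - 1) • (1 : A) := by
  have hcube : J ^ 3 = p • J ^ 2 + q • J := by
    rw [pow_succ', hJ, mul_add, mul_smul_comm, mul_smul_comm, mul_one, ← sq, hJ]
  rw [hcube, hJ]
  module

theorem smul_add_smul_one_eq_zero_iff [Field R] [Algebra R A] [Nontrivial A] {a b : R} {x : A} :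
    a • x + b • (1 : A) = 0 ↔ (a = 0 ∧ b = 0) ∨ (a ≠ 0 ∧ x = (-b / a) • (1 : A)) := by
  by_cases ha : a = 0
  · simp [ha]
  · rw [add_eq_zero_iff_eq_neg, ← neg_smul, div_eq_inv_mul, mul_smul, eq_inv_smul_iff₀ ha]
    simp [ha]

end Algebra

/-- Let `J` be a metallic structure (`J² = p·J + q·id`) on a nontrivial real module. Then
`J` is an almost plastic structure (`J³ − J − id = 0`) if and only if either
(`p³ − p + 1 = 0` and `q = 1 − p²`), or (`q ≠ 1 − p²` and
`J = ((1 − pq)/(p² + q − 1))·id`). -/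
theorem metallic_is_plastic_iff (V : Type*) [AddCommGroup V] [Module ℝ V] [Nontrivial V]
    (p q : ℝ) (J : Module.End ℝ V) (hJ : J ^ 2 = p • J + q • (1 : Module.End ℝ V)) :
    J ^ 3 - J - 1 = 0 ↔
      (p ^ 3 - p + 1 = 0 ∧ q = 1 - p ^ 2) ∨
        (q ≠ 1 - p ^ 2 ∧ J = ((1 - p * q) / (p ^ 2 + q - 1)) • (1 : Module.End ℝ V)) := by
  rw [cube_sub_self_sub_one_of_sq_eq hJ, smul_add_smul_one_eq_zero_iff, neg_sub]
  have hq : q = 1 - p ^ 2 ↔ p ^ 2 + q - 1 = 0 := ⟨fun h => by linarith, fun h => by linarith⟩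
  refine or_congr ⟨fun ⟨h₁, h₂⟩ => ⟨?_, ?_⟩, fun ⟨h₁, h₂⟩ => ⟨?_, ?_⟩⟩ (by simp only [ne_eq, hq])
  · linear_combination p * h₁ - h₂
  · exact hq.2 h₁
  · exact hq.1 h₂
  · linear_combination p * h₂ - h₁
end

section
/- Let V be a nontrivial module over ℝ, let p, q be real numbers, and let J be a linear endomorphism of V satisfying J² = p·J + q·id. Then J³ − J + id = 0 if and only if either (p is the plastic number, i.e. p³ − p − 1 = 0, and q = 1 − p²), or (q ≠ 1 − p² and J = (−(1 + p·q)/(p² + q − 1))·id). -/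
lemma smul_one_eq_zero_iff {V : Type*} [AddCommGroup V] [Module ℝ V] [Nontrivial V]
    (c : ℝ) : c • (1 : Module.End ℝ V) = 0 ↔ c = 0 := by
  constructor
  · intro h
    by_contra hc
    obtain ⟨v, hv⟩ := exists_ne (0 : V)
    have := congrArg (fun f : Module.End ℝ V => f v) h
    simp only [LinearMap.smul_apply, Module.End.one_apply, LinearMap.zero_apply] at this
    rcases smul_eq_zero.mp this with h1 | h1
    · exact hc h1
    · exact hv h1
  · rintro rfl; simp

/-- Let `J` be a metallic structure (`J² = p·J + q·id`) on a nontrivial real module. Then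
`J` satisfies the dual equation `J³ − J + id = 0` if and only if either
(`p` is the plastic number, i.e. `p³ − p − 1 = 0`, and `q = 1 − p²`), or
(`q ≠ 1 − p²` and `J = (−(1 + pq)/(p² + q − 1))·id`). -/
theorem metallic_is_dual_plastic_iff (V : Type*) [AddCommGroup V] [Module ℝ V]
    [Nontrivial V] (p q : ℝ) (J : Module.End ℝ V)
    (hJ : J ^ 2 = p • J + q • (1 : Module.End ℝ V)) :
    J ^ 3 - J + 1 = 0 ↔
      (p ^ 3 - p - 1 = 0 ∧ q = 1 - p ^ 2) ∨
        (q ≠ 1 - p ^ 2 ∧ J = (-(1 + p * q) / (p ^ 2 + q - 1)) • (1 : Module.End ℝ V)) := by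
  have key : J ^ 3 - J + 1 = (p ^ 2 + q - 1) • J + (p * q + 1) • (1 : Module.End ℝ V) := by
    have h3 : J ^ 3 = J ^ 2 * J := by rw [pow_succ]
    rw [h3, hJ]
    simp only [add_mul, smul_mul_assoc, one_mul, ← pow_two, hJ]
    module
  rw [key]
  constructor
  · intro h
    by_cases hq : q = 1 - p ^ 2
    · left
      refine ⟨?_, hq⟩
      have hc : p ^ 2 + q - 1 = 0 := by rw [hq]; ring
      rw [hc, zero_smul, zero_add, smul_one_eq_zero_iff] at h
      subst hq; linear_combination -h
    · right
      refine ⟨hq, ?_⟩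
      have hc : p ^ 2 + q - 1 ≠ 0 := fun hc => hq (by linarith [hc])
      have : (p ^ 2 + q - 1) • J = (-(p * q + 1)) • (1 : Module.End ℝ V) := by
        rw [neg_smul]
        linear_combination (norm := module) h
      have := congrArg (fun x => ((p ^ 2 + q - 1)⁻¹) • x) this
      simp only [smul_smul, inv_mul_cancel₀ hc, one_smul] at this
      rw [this]
      congr 1
      field_simp
      ring
  · rintro (⟨hp, hq⟩ | ⟨hq, hJ'⟩)
    · have hc : p ^ 2 + q - 1 = 0 := by rw [hq]; ring
      have hc2 : p * q + 1 = 0 := by rw [hq]; nlinarith [hp]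
      rw [hc, hc2, zero_smul, zero_smul, add_zero]
    · have hc : p ^ 2 + q - 1 ≠ 0 := fun hc => hq (by linarith [hc])
      rw [hJ', smul_smul, ← add_smul, smul_one_eq_zero_iff]
      field_simp
      ring
end

section
/- Let V be a finite-dimensional real inner product space and let J be a linear endomorphism of V which is self-adjoint (⟨J x, y⟩ = ⟨x, J y⟩ for all x, y ∈ V) and satisfies J³ − J − id = 0. Then J = ρ·id, where ρ is the plastic number. In other words, except for the trivial case J = ρ·id, an almost plastic structure cannot be symmetric with respect to a positive definite scalar product. -/
theorem plasticNumber_pow_three : plasticNumber ^ 3 = plasticNumber + 1 := by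
  have hsqrt : Real.sqrt 69 ≤ 9 := (Real.sqrt_le_left (by norm_num)).2 (by norm_num)
  have hsq : Real.sqrt 69 ^ 2 = 69 := Real.sq_sqrt (by norm_num)
  unfold plasticNumber
  have hplus : (0 : ℝ) ≤ (9 + Real.sqrt 69) / 18 := by positivity
  have hminus : (0 : ℝ) ≤ (9 - Real.sqrt 69) / 18 := by linarith
  have hcube (a : ℝ) (ha : 0 ≤ a) : (a ^ ((1 : ℝ) / 3)) ^ 3 = a := by
    rw [one_div]; exact_mod_cast Real.rpow_inv_natCast_pow ha three_ne_zero
  have hu := hcube _ hplus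
  have hv := hcube _ hminus
  set u := ((9 + Real.sqrt 69) / 18) ^ ((1 : ℝ) / 3)
  set v := ((9 - Real.sqrt 69) / 18) ^ ((1 : ℝ) / 3)
  have huv : u * v = 1 / 3 := by
    refine (pow_left_inj₀ (by positivity) (by norm_num) three_ne_zero).1 ?_
    rw [mul_pow, hu, hv]
    nlinarith
  calc (u + v) ^ 3 = u ^ 3 + v ^ 3 + 3 * (u * v) * (u + v) := by ring
    _ = u + v + 1 := by rw [hu, hv, huv]; ring

theorem four_lt_three_mul_sq_of_pow_three_eq {x : ℝ} (hx : x ^ 3 = x + 1) : 4 < 3 * x ^ 2 := by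
  nlinarith [sq_nonneg (x - 1), sq_nonneg (x + 1), sq_nonneg x]

theorem LinearMap.IsSymmetric.eq_zero_of_apply_apply_add_smul_add_smul_eq_zero {E : Type*}
    [NormedAddCommGroup E] [InnerProductSpace ℝ E] {T : E →ₗ[ℝ] E} (hT : T.IsSymmetric)
    {b c : ℝ} (hbc : b ^ 2 < 4 * c) {y : E} (hy : T (T y) + b • T y + c • y = 0) : y = 0 := by
  have hinner : ‖T y‖ ^ 2 + b * inner ℝ (T y) y + c * ‖y‖ ^ 2 = 0 := by
    have := congrArg (fun z => inner ℝ z y) hy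
    simpa only [inner_add_left, real_inner_smul_left, hT (T y) y, real_inner_self_eq_norm_sq,
      inner_zero_left] using this
  have hcs : -(|b| * (‖T y‖ * ‖y‖)) ≤ b * inner ℝ (T y) y :=
    calc -(|b| * (‖T y‖ * ‖y‖)) ≤ -(|b| * |inner ℝ (T y) y|) :=
          neg_le_neg (mul_le_mul_of_nonneg_left (abs_real_inner_le_norm _ _) (abs_nonneg b))
      _ = -|b * inner ℝ (T y) y| := by rw [abs_mul]
      _ ≤ b * inner ℝ (T y) y := neg_abs_le _
  have hy0 : ‖y‖ ^ 2 = 0 := by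
    nlinarith [sq_nonneg (2 * ‖T y‖ - |b| * ‖y‖), sq_abs b, sq_nonneg ‖y‖]
  simpa using hy0

theorem Module.End.apply_sq_add_smul_add_smul_sub_smul_eq_zero {R M : Type*} [CommRing R]
    [AddCommGroup M] [Module R M] {J : Module.End R M} {ρ : R} (hρ : ρ ^ 3 = ρ + 1)
    (hJ : J ^ 3 - J - 1 = 0) (x : M) :
    J (J (J x - ρ • x)) + ρ • J (J x - ρ • x) + (ρ ^ 2 - 1) • (J x - ρ • x) = 0 := by
  have hJx : J (J (J x)) - J x - x = 0 := by
    simpa [pow_succ, Module.End.mul_apply] using congrArg (fun f : Module.End R M => f x) hJ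
  simp only [map_sub, map_smul]
  linear_combination (norm := module) hJx - hρ • x

theorem selfadjoint_almost_plastic_is_trivial_general (V : Type*) [NormedAddCommGroup V]
    [InnerProductSpace ℝ V] (J : Module.End ℝ V)
    (hsym : ∀ x y : V, (inner ℝ (J x) y : ℝ) = inner ℝ x (J y))
    (hJ : J ^ 3 - J - 1 = 0) :
    J = plasticNumber • (1 : Module.End ℝ V) := by
  have hρ := plasticNumber_pow_three
  ext x
  rw [LinearMap.smul_apply, Module.End.one_apply, ← sub_eq_zero]
  refine LinearMap.IsSymmetric.eq_zero_of_apply_apply_add_smul_add_smul_eq_zero hsym ?_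
    (Module.End.apply_sq_add_smul_add_smul_sub_smul_eq_zero hρ hJ x)
  linarith [four_lt_three_mul_sq_of_pow_three_eq hρ]

/-- A self-adjoint almost plastic structure (`J³ − J − id = 0` with
`⟨J x, y⟩ = ⟨x, J y⟩`) on a finite-dimensional real inner product space is the trivial one
`J = ρ·id`, where `ρ` is the plastic number. -/
theorem selfadjoint_almost_plastic_is_trivial (V : Type*) [NormedAddCommGroup V]
    [InnerProductSpace ℝ V] [FiniteDimensional ℝ V] (J : Module.End ℝ V)
    (hsym : ∀ x y : V, (inner ℝ (J x) y : ℝ) = inner ℝ x (J y))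
    (hJ : J ^ 3 - J - 1 = 0) :
    J = plasticNumber • (1 : Module.End ℝ V) :=
  selfadjoint_almost_plastic_is_trivial_general V J hsym hJ
end

section
/- Let V be a real vector space, let g : V ≃ V* be a linear equivalence which is symmetric, i.e. (g x)(y) = (g y)(x) for all x, y, and let J₁, J₂ be linear endomorphisms of V satisfying: (i) J₁ ∘ J₂ = J₂ ∘ J₁; (ii) (J₁ + J₂)³ − (J₁ + J₂) + id = 0; (iii) (g (J₁ x))(y) = (g x)(J₁ y) for all x, y; (iv) (g (J₂ x))(y) = (g x)(J₂ y) for all x, y. Then the endomorphism Ĵ of V × V* defined by Ĵ(x, η) = (J₁ x + (id − J₁J₂ − J₁² − J₂²)(g⁻¹ η), g x + J₂* η), where J₂* is the dual map of J₂, satisfies Ĵ³ − Ĵ − id = 0. -/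
/-- Let `g : V ≃ V*` be a symmetric linear equivalence (the flat isomorphism of a
pseudo-Riemannian metric) and let `J₁, J₂` be commuting `g`-symmetric endomorphisms of `V`
with `(J₁ + J₂)³ − (J₁ + J₂) + id = 0`. Then the generalized structure
`Ĵ(x, η) = (J₁ x + (id − J₁J₂ − J₁² − J₂²)(g⁻¹ η), g x + J₂* η)` on `V × V*` is a
generalized almost plastic structure: `Ĵ³ − Ĵ − id = 0`. -/
theorem generalized_almost_plastic_of_two_tensors (V : Type*) [AddCommGroup V]
    [Module ℝ V] (g : V ≃ₗ[ℝ] Module.Dual ℝ V) (hg : ∀ x y : V, g x y = g y x)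
    (J₁ J₂ : Module.End ℝ V)
    (hcomm : J₁ * J₂ = J₂ * J₁)
    (hcube : (J₁ + J₂) ^ 3 - (J₁ + J₂) + 1 = 0)
    (h₁ : ∀ x y : V, g (J₁ x) y = g x (J₁ y))
    (h₂ : ∀ x y : V, g (J₂ x) y = g x (J₂ y))
    (Jhat : Module.End ℝ (V × Module.Dual ℝ V))
    (hJhat : ∀ (x : V) (η : Module.Dual ℝ V),
      Jhat (x, η) = (J₁ x + (1 - J₁ * J₂ - J₁ ^ 2 - J₂ ^ 2 : Module.End ℝ V) (g.symm η),
        g x + J₂.dualMap η)) :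
    Jhat ^ 3 - Jhat - 1 = 0 := by
  classical
  -- the subring generated by `J₁, J₂` is commutative
  have hcomm' : ∀ x ∈ ({J₁, J₂} : Set (Module.End ℝ V)),
      ∀ y ∈ ({J₁, J₂} : Set (Module.End ℝ V)), x * y = y * x := by
    rintro x (rfl | rfl) y (rfl | rfl) <;> first | rfl | exact hcomm | exact hcomm.symm
  letI : CommRing (Subring.closure ({J₁, J₂} : Set (Module.End ℝ V))) :=
    Subring.closureCommRingOfComm hcomm'
  have ha : J₁ ∈ Subring.closure ({J₁, J₂} : Set (Module.End ℝ V)) :=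
    Subring.subset_closure (by simp)
  have hc : J₂ ∈ Subring.closure ({J₁, J₂} : Set (Module.End ℝ V)) :=
    Subring.subset_closure (by simp)
  set a : Subring.closure ({J₁, J₂} : Set (Module.End ℝ V)) := ⟨J₁, ha⟩ with hadef
  set c : Subring.closure ({J₁, J₂} : Set (Module.End ℝ V)) := ⟨J₂, hc⟩ with hcdef
  have hcubeS : (a + c) ^ 3 - (a + c) + 1 = 0 := by
    apply Subtype.ext
    push_cast
    exact hcube
  set B : Module.End ℝ V := 1 - J₁ * J₂ - J₁ ^ 2 - J₂ ^ 2 with hB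
  have hbB : ((1 - a * c - a ^ 2 - c ^ 2 :
      Subring.closure ({J₁, J₂} : Set (Module.End ℝ V))) : Module.End ℝ V) = B := by
    push_cast; rfl
  -- the four key operator identities
  have K1 : J₁ * (J₁ ^ 2 + B) + B * (J₁ + J₂) = J₁ + 1 := by
    have h : a * (a ^ 2 + (1 - a * c - a ^ 2 - c ^ 2)) +
        (1 - a * c - a ^ 2 - c ^ 2) * (a + c) = a + 1 := by
      linear_combination -hcubeS
    have := congrArg Subtype.val h
    push_cast [hbB] at this
    exact this
  have K2 : J₁ * (J₁ * B + B * J₂) + B * (B + J₂ ^ 2) = B := by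
    have h : a * (a * (1 - a * c - a ^ 2 - c ^ 2) + (1 - a * c - a ^ 2 - c ^ 2) * c) +
        (1 - a * c - a ^ 2 - c ^ 2) * ((1 - a * c - a ^ 2 - c ^ 2) + c ^ 2) =
        (1 - a * c - a ^ 2 - c ^ 2) := by ring
    have := congrArg Subtype.val h
    push_cast [hbB] at this
    exact this
  have K3 : (J₁ ^ 2 + B) + J₂ * (J₁ + J₂) = 1 := by
    have h : (a ^ 2 + (1 - a * c - a ^ 2 - c ^ 2)) + c * (a + c) = 1 := by ring
    have := congrArg Subtype.val h
    push_cast [hbB] at this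
    exact this
  have K4 : (J₁ * B + B * J₂) + J₂ * (B + J₂ ^ 2) = J₂ + 1 := by
    have h : (a * (1 - a * c - a ^ 2 - c ^ 2) + (1 - a * c - a ^ 2 - c ^ 2) * c) +
        c * ((1 - a * c - a ^ 2 - c ^ 2) + c ^ 2) = c + 1 := by
      linear_combination -hcubeS
    have := congrArg Subtype.val h
    push_cast [hbB] at this
    exact this
  -- the dual map identity
  have hdual : ∀ v : V, J₂.dualMap (g v) = g (J₂ v) := by
    intro v
    ext y
    exact (h₂ v y).symm
  -- one application of Jhat in "metric coordinates"
  have step : ∀ v w : V, Jhat (v, g w) = (J₁ v + B w, g (v + J₂ w)) := by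
    intro v w
    rw [hJhat]
    refine Prod.ext ?_ ?_
    · simp [hB]
    · simp [hdual, map_add]
  -- componentwise identities for the third iterate
  have c1 : ∀ v w : V,
      J₁ (J₁ (J₁ v + B w) + B (v + J₂ w)) + B ((J₁ v + B w) + J₂ (v + J₂ w))
        = (J₁ v + B w) + v := by
    intro v w
    have e : J₁ (J₁ (J₁ v + B w) + B (v + J₂ w)) + B ((J₁ v + B w) + J₂ (v + J₂ w))
        = (J₁ * (J₁ ^ 2 + B) + B * (J₁ + J₂)) v +
          (J₁ * (J₁ * B + B * J₂) + B * (B + J₂ ^ 2)) w := by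
      simp only [LinearMap.add_apply, Module.End.mul_apply, map_add, pow_succ, pow_zero,
        one_mul]
      abel
    rw [e, K1, K2]
    simp only [LinearMap.add_apply, Module.End.one_apply]
    abel
  have c2 : ∀ v w : V,
      (J₁ (J₁ v + B w) + B (v + J₂ w)) + J₂ ((J₁ v + B w) + J₂ (v + J₂ w))
        = (v + J₂ w) + w := by
    intro v w
    have e : (J₁ (J₁ v + B w) + B (v + J₂ w)) + J₂ ((J₁ v + B w) + J₂ (v + J₂ w))
        = ((J₁ ^ 2 + B) + J₂ * (J₁ + J₂)) v + ((J₁ * B + B * J₂) + J₂ * (B + J₂ ^ 2)) w := by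
      simp only [LinearMap.add_apply, Module.End.mul_apply, map_add, pow_succ, pow_zero,
        one_mul]
      abel
    rw [e, K3, K4]
    simp only [LinearMap.add_apply, Module.End.one_apply]
    abel
  -- finish pointwise
  apply LinearMap.ext
  rintro ⟨x, η⟩
  · have hη : η = g (g.symm η) := (g.apply_symm_apply η).symm
    simp only [LinearMap.sub_apply, Module.End.one_apply, pow_succ, pow_zero, one_mul,
      Module.End.mul_apply, LinearMap.zero_apply]
    rw [sub_sub, sub_eq_zero, hη]
    set u := g.symm η
    rw [step x u, step _ _, step _ _]
    rw [Prod.mk_add_mk]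
    refine Prod.ext ?_ ?_
    · exact c1 _ _
    · show g _ = g (x + J₂ u) + g (u)
      rw [← map_add]
      exact congrArg g (c2 x u)
end

section
/- Let V be a real vector space, let g : V ≃ V* be a linear equivalence which is symmetric, i.e. (g x)(y) = (g y)(x) for all x, y, and let J₁, J₂ be linear endomorphisms of V satisfying: (i) J₁ ∘ J₂ = J₂ ∘ J₁; (ii) (J₁ + J₂)³ − (J₁ + J₂) − id = 0 (i.e. J₁ + J₂ is an almost plastic structure); (iii) (g (J₁ x))(y) = (g x)(J₁ y) for all x, y; (iv) (g (J₂ x))(y) = (g x)(J₂ y) for all x, y. Then the endomorphism Ĵ of V × V* defined by Ĵ(x, η) = (J₁ x + (id − J₁J₂ − J₁² − J₂²)(g⁻¹ η), g x + J₂* η), where J₂* is the dual map of J₂, satisfies the dual equation Ĵ³ − Ĵ + id = 0. -/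
private lemma key_ids {R : Type*} [Ring R] (hmc : ∀ x y : R, x * y = y * x) (A B : R)
    (h : (A + B) ^ 3 - (A + B) - 1 = 0) :
    (A*A*A + A*(1 - A*B - A^2 - B^2) + (1 - A*B - A^2 - B^2)*A
      + (1 - A*B - A^2 - B^2)*B - A + 1 = 0) ∧
    (A*A*(1 - A*B - A^2 - B^2) + A*(1 - A*B - A^2 - B^2)*B
      + (1 - A*B - A^2 - B^2)*(1 - A*B - A^2 - B^2)
      + (1 - A*B - A^2 - B^2)*B*B - (1 - A*B - A^2 - B^2) = 0) ∧
    (A*A + (1 - A*B - A^2 - B^2) + B*A + B*B - 1 = 0) ∧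
    (A*(1 - A*B - A^2 - B^2) + (1 - A*B - A^2 - B^2)*B + B*(1 - A*B - A^2 - B^2)
      + B*B*B - B + 1 = 0) := by
  letI : CommRing R := { ‹Ring R› with mul_comm := hmc }
  refine ⟨by linear_combination -h, by ring, by ring, by linear_combination -h⟩

private lemma key_ids_end {V : Type*} [AddCommGroup V] [Module ℝ V]
    (A B : Module.End ℝ V) (hcomm : A * B = B * A)
    (h : (A + B) ^ 3 - (A + B) - 1 = 0) :
    (A*A*A + A*(1 - A*B - A^2 - B^2) + (1 - A*B - A^2 - B^2)*A
      + (1 - A*B - A^2 - B^2)*B - A + 1 = 0) ∧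
    (A*A*(1 - A*B - A^2 - B^2) + A*(1 - A*B - A^2 - B^2)*B
      + (1 - A*B - A^2 - B^2)*(1 - A*B - A^2 - B^2)
      + (1 - A*B - A^2 - B^2)*B*B - (1 - A*B - A^2 - B^2) = 0) ∧
    (A*A + (1 - A*B - A^2 - B^2) + B*A + B*B - 1 = 0) ∧
    (A*(1 - A*B - A^2 - B^2) + (1 - A*B - A^2 - B^2)*B + B*(1 - A*B - A^2 - B^2)
      + B*B*B - B + 1 = 0) := by
  have hc : ∀ x ∈ ({A, B} : Set (Module.End ℝ V)), ∀ y ∈ ({A, B} : Set (Module.End ℝ V)),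
      x * y = y * x := by
    rintro x (rfl | rfl) y (rfl | rfl) <;> simp_all
  set S := Algebra.adjoin ℝ ({A, B} : Set (Module.End ℝ V)) with hS
  have hle := Algebra.adjoin_le_centralizer_centralizer ℝ ({A, B} : Set (Module.End ℝ V))
  have hmc : ∀ x y : S, x * y = y * x := fun x y =>
    Subtype.ext <| Set.centralizer_centralizer_comm_of_comm hc _ (hle x.2) _ (hle y.2)
  have hA : A ∈ S := Algebra.subset_adjoin (by simp)
  have hB : B ∈ S := Algebra.subset_adjoin (by simp)
  have hab : ((⟨A, hA⟩ : S) + ⟨B, hB⟩) ^ 3 - ((⟨A, hA⟩ : S) + ⟨B, hB⟩) - 1 = 0 :=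
    Subtype.ext (by push_cast; exact h)
  obtain ⟨k1, k2, k3, k4⟩ := key_ids hmc (⟨A, hA⟩ : S) ⟨B, hB⟩ hab
  refine ⟨?_, ?_, ?_, ?_⟩
  · have := congrArg Subtype.val k1; push_cast at this; exact this
  · have := congrArg Subtype.val k2; push_cast at this; exact this
  · have := congrArg Subtype.val k3; push_cast at this; exact this
  · have := congrArg Subtype.val k4; push_cast at this; exact this

/-- Let `g : V ≃ V*` be a symmetric linear equivalence and let `J₁, J₂` be commuting
`g`-symmetric endomorphisms of `V` such that `J₁ + J₂` is an almost plastic structure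
(`(J₁ + J₂)³ − (J₁ + J₂) − id = 0`). Then the generalized structure
`Ĵ(x, η) = (J₁ x + (id − J₁J₂ − J₁² − J₂²)(g⁻¹ η), g x + J₂* η)` on `V × V*` satisfies
the dual equation `Ĵ³ − Ĵ + id = 0`. -/
theorem generalized_dual_plastic_of_two_tensors (V : Type*) [AddCommGroup V]
    [Module ℝ V] (g : V ≃ₗ[ℝ] Module.Dual ℝ V) (hg : ∀ x y : V, g x y = g y x)
    (J₁ J₂ : Module.End ℝ V)
    (hcomm : J₁ * J₂ = J₂ * J₁)
    (hcube : (J₁ + J₂) ^ 3 - (J₁ + J₂) - 1 = 0)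
    (h₁ : ∀ x y : V, g (J₁ x) y = g x (J₁ y))
    (h₂ : ∀ x y : V, g (J₂ x) y = g x (J₂ y))
    (Jhat : Module.End ℝ (V × Module.Dual ℝ V))
    (hJhat : ∀ (x : V) (η : Module.Dual ℝ V),
      Jhat (x, η) = (J₁ x + (1 - J₁ * J₂ - J₁ ^ 2 - J₂ ^ 2 : Module.End ℝ V) (g.symm η),
        g x + J₂.dualMap η)) :
    Jhat ^ 3 - Jhat + 1 = 0 := by
  obtain ⟨k1, k2, k3, k4⟩ := key_ids_end J₁ J₂ hcomm hcube
  set P : Module.End ℝ V := 1 - J₁ * J₂ - J₁ ^ 2 - J₂ ^ 2 with hP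
  -- the structure in terms of g-coordinates
  have hdual : ∀ u : V, J₂.dualMap (g u) = g (J₂ u) := by
    intro u
    ext y
    simp only [LinearMap.dualMap_apply]
    exact (h₂ u y).symm
  have hstep : ∀ (x u : V), Jhat (x, g u) = (J₁ x + P u, g (x + J₂ u)) := by
    intro x u
    rw [hJhat]
    refine Prod.ext ?_ ?_
    · simp
    · simp [hdual]
  apply LinearMap.ext
  rintro ⟨x, η⟩
  have hη : (x, η) = (x, g (g.symm η)) := by simp
  rw [LinearMap.add_apply, LinearMap.sub_apply, Module.End.one_apply,
    pow_succ, pow_succ, pow_one, Module.End.mul_apply, Module.End.mul_apply, LinearMap.zero_apply,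
    hη, hstep, hstep, hstep]
  set u := g.symm η
  have hx1 := congrArg (fun f : Module.End ℝ V => f x) k1
  have hu1 := congrArg (fun f : Module.End ℝ V => f u) k2
  have hx2 := congrArg (fun f : Module.End ℝ V => f x) k3
  have hu2 := congrArg (fun f : Module.End ℝ V => f u) k4
  simp only [LinearMap.add_apply, LinearMap.sub_apply, Module.End.one_apply,
    LinearMap.zero_apply, Module.End.mul_apply] at hx1 hu1 hx2 hu2
  rw [Prod.mk_sub_mk, Prod.mk_add_mk, Prod.mk_eq_zero]
  constructor
  · simp only [map_add]
    linear_combination (norm := abel) hx1 + hu1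
  · rw [← map_sub, ← map_add, LinearEquiv.map_eq_zero_iff]
    simp only [map_add]
    linear_combination (norm := abel) hx2 + hu2
end

section
/- Let V be a real vector space, let g : V ≃ V* be a linear equivalence which is symmetric, i.e. (g x)(y) = (g y)(x) for all x, y, and let J be a linear endomorphism of V satisfying J³ − J + id = 0 and (g (J x))(y) = (g x)(J y) for all x, y ∈ V. Then the endomorphism Ĵ of V × V* defined by Ĵ(x, η) = (J x + (id − J²)(g⁻¹ η), g x) satisfies Ĵ³ − Ĵ − id = 0, i.e. Ĵ is a generalized almost plastic structure. -/
/-- Let `g : V ≃ V*` be a symmetric linear equivalence (the flat isomorphism of a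
pseudo-Riemannian metric) and let `J` be a `g`-symmetric endomorphism of `V` satisfying
`J³ − J + id = 0`. Then the generalized structure
`Ĵ(x, η) = (J x + (id − J²)(g⁻¹ η), g x)` on `V × V*` is a generalized almost plastic
structure: `Ĵ³ − Ĵ − id = 0`. -/
theorem generalized_almost_plastic_of_dual_cubic (V : Type*) [AddCommGroup V]
    [Module ℝ V] (g : V ≃ₗ[ℝ] Module.Dual ℝ V) (hg : ∀ x y : V, g x y = g y x)
    (J : Module.End ℝ V) (hJ : J ^ 3 - J + 1 = 0)
    (hsym : ∀ x y : V, g (J x) y = g x (J y))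
    (Jhat : Module.End ℝ (V × Module.Dual ℝ V))
    (hJhat : ∀ (x : V) (η : Module.Dual ℝ V),
      Jhat (x, η) = (J x + (1 - J ^ 2 : Module.End ℝ V) (g.symm η), g x)) :
    Jhat ^ 3 - Jhat - 1 = 0 := by
  have h3 : ∀ v : V, J (J (J v)) = J v - v := by
    intro v
    have h := DFunLike.congr_fun hJ v
    simp only [LinearMap.add_apply, LinearMap.sub_apply, Module.End.one_apply,
      LinearMap.zero_apply, pow_succ, pow_zero, Module.End.mul_apply, Module.End.one_apply] at h
    have h2 : J (J (J v)) - (J v - v) = 0 := by rw [← h]; abel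
    exact sub_eq_zero.mp h2
  apply LinearMap.ext
  rintro ⟨x, η⟩

  simp only [LinearMap.sub_apply, Module.End.one_apply, pow_succ, pow_zero, one_mul,
    Module.End.mul_apply, hJhat, map_add, map_sub, LinearMap.sub_apply, Module.End.one_apply,
    g.symm_apply_apply, g.apply_symm_apply, h3, Prod.mk_sub_mk, Prod.ext_iff,
    Prod.fst_sub, Prod.snd_sub, Prod.mk.injEq, Prod.fst_zero, Prod.snd_zero, LinearMap.zero_apply]
  constructor <;> [skip; skip] <;> abel
end
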